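/- Fix q ∈ ℝ with 0 < q < 1 and nonzero A, δ, μ ∈ ℂ, and set z = μ + q/(Aδμ). For n ≥ 0 define H_n = (A;q)_n μⁿ · ₁φ₁(Aqⁿ; 0; q, Aδμ²). Then for every n ≥ 1, H_{n+1} − z H_n + (q/(Aδ)) (1 − Aq^{n−1}) H_{n−1} = 0, i.e. (H_n) solves the associated continuous q-Hermite recurrence; this holds for each of the two roots μ of μ² − zμ + q/(Aδ) = 0. -/

import Mathlib

open Filter

noncomputable def qp (q a : ℂ) (n : ℕ) : ℂ := ∏ j ∈ Finset.range n, (1 - a * q ^ j)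
noncomputable def qpInf (q a : ℂ) : ℂ := ∏' j : ℕ, (1 - a * q ^ j)
noncomputable def phi32 (q a b c d e w : ℂ) : ℂ :=
  ∑' k : ℕ, (qp q a k * qp q b k * qp q c k) / (qp q d k * qp q e k * qp q q k) * w ^ k
noncomputable def phi21 (q a b c w : ℂ) : ℂ :=
  ∑' k : ℕ, (qp q a k * qp q b k) / (qp q c k * qp q q k) * w ^ k
noncomputable def phi11 (q a b w : ℂ) : ℂ :=
  ∑' k : ℕ, qp q a k / (qp q b k * qp q q k) * (-1) ^ k * q ^ (k * (k - 1) / 2) * w ^ k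

noncomputable def Prec {K : Type*} [Field K] (a b2 : ℕ → K) (z : K) : ℕ → K
  | 0 => 1
  | 1 => z - a 0
  | n + 2 => (z - a (n + 1)) * Prec a b2 z (n + 1) - b2 (n + 1) * Prec a b2 z n

noncomputable def aCDH (q A B C D : ℂ) (n : ℕ) : ℂ :=
  (1 / A + 1 / B + 1 / C + 1 / D) * q ^ (n : ℤ) - (1 + q) * q ^ (2 * (n : ℤ) - 1)

noncomputable def bCDH (q A B C D : ℂ) (n : ℕ) : ℂ :=
  q / (A * B * C * D) * (1 - A * q ^ ((n : ℤ) - 1)) * (1 - B * q ^ ((n : ℤ) - 1)) *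
    (1 - C * q ^ ((n : ℤ) - 1)) * (1 - D * q ^ ((n : ℤ) - 1))

/-- `X` solves the associated continuous dual `q`-Hahn recurrence
`X_{n+1} - (z - a_n) X_n + b_n² X_{n-1} = 0` for `n ≥ 1`. -/
def SolvesCDH (q A B C D z : ℂ) (X : ℕ → ℂ) : Prop :=
  ∀ n : ℕ, 1 ≤ n →
    X (n + 1) - (z - aCDH q A B C D n) * X n + bCDH q A B C D n * X (n - 1) = 0

/-! With `φ(a) = ₁φ₁(a; 0; q, w)`, the series satisfies the contiguous relation
`(1 - a q) w φ(a q²) - (w + q) φ(a q) + q φ(a) = 0`, which holds term by term up to a telescoping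
sum, since `(1 - a q) (a q²; q)_k = (a q; q)_{k+1}` and
`(a; q)_{k+1} - (a q; q)_{k+1} = -a (1 - q^{k+1}) (a q; q)_k`.
For `a = A q^{n-1}`, `w = A δ μ²` and `z μ = (w + q) / (A δ)`, the recurrence for `H` is this
relation multiplied by `(A; q)_n μ^{n-1} / (A δ)`. -/

namespace QHermite

lemma qp_zero_left (q : ℂ) (k : ℕ) : qp q 0 k = 1 := by simp [qp]

lemma qp_succ (q a : ℂ) (k : ℕ) : qp q a (k + 1) = qp q a k * (1 - a * q ^ k) :=
  Finset.prod_range_succ _ _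

lemma qp_succ' (q a : ℂ) (k : ℕ) : qp q a (k + 1) = (1 - a) * qp q (a * q) k := by
  rw [qp, Finset.prod_range_succ', pow_zero, mul_one, mul_comm]
  exact congrArg _ (Finset.prod_congr rfl fun j _ => by ring)

/-- The `k`-th term of `₁φ₁(a; 0; q, w)`. -/
noncomputable def phi11Term (q a w : ℂ) (k : ℕ) : ℂ :=
  qp q a k / qp q q k * (-1) ^ k * q ^ (k * (k - 1) / 2) * w ^ k

lemma phi11Term_zero (q a w : ℂ) : phi11Term q a w 0 = 1 := by simp [phi11Term, qp]

lemma phi11_zero_eq_tsum (q a w : ℂ) : phi11 q a 0 w = ∑' k, phi11Term q a w k := by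
  simp only [phi11, phi11Term, qp_zero_left, one_mul]

variable {q : ℂ}

lemma one_sub_pow_succ_ne_zero (hq : ‖q‖ < 1) (k : ℕ) : 1 - q ^ (k + 1) ≠ 0 := by
  rw [sub_ne_zero, ne_comm]
  apply ne_of_apply_ne norm
  rw [norm_one, norm_pow]
  exact (pow_lt_one₀ (norm_nonneg q) hq k.succ_ne_zero).ne

lemma qp_self_ne_zero (hq : ‖q‖ < 1) (k : ℕ) : qp q q k ≠ 0 :=
  Finset.prod_ne_zero_iff.mpr fun j _ => by
    simpa [← pow_succ'] using one_sub_pow_succ_ne_zero hq j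

lemma phi11Term_succ (hq : ‖q‖ < 1) (a w : ℂ) (k : ℕ) :
    phi11Term q a w (k + 1) =
      phi11Term q a w k * ((1 - a * q ^ k) * (-q ^ k * w) / (1 - q ^ (k + 1))) := by
  have := qp_self_ne_zero hq k
  have := one_sub_pow_succ_ne_zero hq k
  simp only [phi11Term, qp_succ, Nat.triangle_succ, pow_add, pow_succ]
  field_simp

-- The ratio of consecutive terms tends to `0`, because of the factor `q ^ k`.
lemma summable_phi11Term (hq : ‖q‖ < 1) (a w : ℂ) : Summable (phi11Term q a w) := by
  have hpow : Tendsto (fun k : ℕ => q ^ k) atTop (nhds 0) :=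
    tendsto_pow_atTop_nhds_zero_of_norm_lt_one hq
  have hratio : Tendsto (fun k : ℕ => (1 - a * q ^ k) * (-q ^ k * w) / (1 - q ^ (k + 1)))
      atTop (nhds 0) := by
    simpa [pow_succ, Pi.div_def] using ((tendsto_const_nhds.sub (hpow.const_mul a)).mul
      (hpow.neg.mul_const w)).div (tendsto_const_nhds.sub (hpow.mul_const q)) (by simp)
  have hnorm := hratio.norm
  rw [norm_zero] at hnorm
  refine summable_of_ratio_norm_eventually_le (r := 1 / 2) (by norm_num) ?_
  filter_upwards [hnorm.eventually_le_const (by norm_num : (0 : ℝ) < 1 / 2)] with k hk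
  rw [phi11Term_succ hq, norm_mul, mul_comm]
  exact mul_le_mul_of_nonneg_right hk (norm_nonneg _)

lemma phi11Term_contiguous (hq : ‖q‖ < 1) (a w : ℂ) (k : ℕ) :
    (1 - a * q) * w * phi11Term q (a * q * q) w k - w * phi11Term q (a * q) w k =
      -(q * (phi11Term q a w (k + 1) - phi11Term q (a * q) w (k + 1))) := by
  have hshift : (1 - a * q) * qp q (a * q * q) k = qp q (a * q) k * (1 - a * q * q ^ k) := by
    rw [← qp_succ', qp_succ]
  have hlower : (1 - a * q) * w * phi11Term q (a * q * q) w k =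
      w * phi11Term q (a * q) w k * (1 - a * q * q ^ k) := by
    unfold phi11Term
    linear_combination (w / qp q q k * (-1) ^ k * q ^ (k * (k - 1) / 2) * w ^ k) * hshift
  have := qp_self_ne_zero hq k
  have : 1 - q * q ^ k ≠ 0 := by simpa [← pow_succ'] using one_sub_pow_succ_ne_zero hq k
  rw [hlower]
  simp only [phi11Term, qp_succ' q a, qp_succ q (a * q), qp_succ q q, Nat.triangle_succ,
    pow_add, pow_succ]
  field_simp
  ring

lemma phi11_contiguous (hq : ‖q‖ < 1) (a w : ℂ) :
    (1 - a * q) * w * phi11 q (a * q * q) 0 w - (w + q) * phi11 q (a * q) 0 w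
      + q * phi11 q a 0 w = 0 := by
  simp only [phi11_zero_eq_tsum]
  have hs (b : ℂ) : HasSum (phi11Term q b w) (∑' k, phi11Term q b w k) :=
    (summable_phi11Term hq b w).hasSum
  have hdiff := ((hs a).sub (hs (a * q))).mul_left q
  rw [← hasSum_nat_add_iff' 1] at hdiff
  have hlhs := ((hs (a * q * q)).mul_left ((1 - a * q) * w)).sub ((hs (a * q)).mul_left w)
  rw [funext (phi11Term_contiguous hq a w)] at hlhs
  have := hlhs.unique hdiff.neg
  simp only [Finset.sum_range_one, phi11Term_zero, sub_self, mul_zero, sub_zero] at this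
  linear_combination this

end QHermite

open QHermite in
/-- The functions `H_n^{(1)}` of (6.32) solve the associated continuous q-Hermite
recurrence (6.31); this holds for each of the two roots `μ` of `μ² - zμ + q/(Aδ) = 0`. -/
theorem stmt19 (q : ℝ) (hq0 : 0 < q) (hq1 : q < 1)
    (A δ μ : ℂ) (hA : A ≠ 0) (hδ : δ ≠ 0) (hμ : μ ≠ 0)
    (z : ℂ) (hz : z = μ + (q : ℂ) / (A * δ * μ))
    (H : ℕ → ℂ)
    (hH : ∀ n : ℕ, H n =
      qp q A n * μ ^ n * phi11 q (A * (q : ℂ) ^ n) 0 (A * δ * μ ^ 2)) :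
    ∀ n : ℕ, 1 ≤ n →
      H (n + 1) - z * H n +
        (q : ℂ) / (A * δ) * (1 - A * (q : ℂ) ^ ((n : ℤ) - 1)) * H (n - 1) = 0 := by
  intro n hn
  obtain ⟨m, rfl⟩ : ∃ m, n = m + 1 := ⟨n - 1, by omega⟩
  have hq : ‖(q : ℂ)‖ < 1 := by
    rw [Complex.norm_real, Real.norm_eq_abs, abs_lt]
    constructor <;> linarith
  have hrel := phi11_contiguous hq (A * (q : ℂ) ^ m) (A * δ * μ ^ 2)
  have hshift (j : ℕ) : A * (q : ℂ) ^ (m + j + 1) = A * (q : ℂ) ^ (m + j) * q := by ring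
  rw [hH, hH, hH, Nat.add_sub_cancel, Nat.cast_succ, add_sub_cancel_right, zpow_natCast]
  simp only [qp_succ, hshift 0, hshift 1, add_zero]
  -- Opaque names keep `field_simp` from rewriting `q * q` to `q ^ 2` inside the arguments.
  generalize phi11 (q : ℂ) (A * q ^ m) 0 (A * δ * μ ^ 2) = φ₀ at hrel ⊢
  generalize phi11 (q : ℂ) (A * q ^ m * q) 0 (A * δ * μ ^ 2) = φ₁ at hrel ⊢
  generalize phi11 (q : ℂ) (A * q ^ m * q * q) 0 (A * δ * μ ^ 2) = φ₂ at hrel ⊢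
  subst hz
  field_simp
  linear_combination qp (q : ℂ) A m * (1 - A * (q : ℂ) ^ m) * μ ^ (m + 1) * hrel
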